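/- arXiv:0909.5216 — 2 statements merged into one kernel-verified Lean document; each statement's English description precedes it below -/
import Mathlib

section
/- Let d ≥ 4 and let ρ₁,…,ρ_{d−1} ∈ (−1,1)∖{0} satisfy |ρ₁| ≥ |ρ₂| ≥ … ≥ |ρ_{d−1}| and |ρ₁| < ρcrit = 0.63055. For the star on d vertices with correlations ρ₁,…,ρ_{d−1} on its edges, the approximate error exponent reduces to a minimum of only two crossover rates: K̃(star) = min{ J̃(ρ₁, ρ₁·ρ₂), J̃(ρ_{d−1}, ρ_{d−1}·ρ₁) }. -/
/-!
Along the path u – 0 – v of the star the crossover rate is J̃(ρᵤ, ρᵤρᵥ), and in the coordinates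
p = 1/(1 - ρᵤ²), q = 1/(1 - ρᵤ²ρᵥ²) it equals (log p - log q)² / (8δ(2δ + 1)) with δ = p - q.
Written as (secant slope of log)² · δ/(8(2δ + 1)), concavity of log shows that it decreases in ρᵥ².
It increases in ρᵤ² as long as ρᵤ² ≤ ρᵥ² ≤ 2/5: bounding log by sinh, the sign of its derivative
reduces to a cubic inequality in p and q which holds for p ≤ 5/3. As ρcrit² < 2/5, the minimum
over ordered pairs of leaves is attained at (1, 2) or at (d - 1, 1).
-/

noncomputable def Jt (a b : ℝ) : ℝ :=
  ((1 / 2) * Real.log ((1 - b ^ 2) / (1 - a ^ 2))) ^ 2 /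
    (2 * (b ^ 4 + b ^ 2) / (1 - b ^ 2) ^ 2 + 2 * (a ^ 4 + a ^ 2) / (1 - a ^ 2) ^ 2
      - 4 * b ^ 2 * (a ^ 2 + 1) / ((1 - b ^ 2) * (1 - a ^ 2)))

/-- The approximate error exponent K̃(G,ρ): the infimum of J̃(ρ_e, ρ_{e′}) over all
non-edges e′ = {u,v} and all edges e on the (unique) path joining u and v, where the
correlation of the non-edge is the product of the edge correlations along that path. -/
noncomputable def Ktilde {V : Type*} (G : SimpleGraph V) (ρ : Sym2 V → ℝ) : ℝ :=
  sInf { x : ℝ | ∃ (u v : V) (p : G.Walk u v), p.IsPath ∧ u ≠ v ∧ ¬ G.Adj u v ∧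
    ∃ e ∈ p.edges, x = Jt (ρ e) ((p.edges.map ρ).prod) }

/-- The star graph on `Fin d`: the vertex with value 0 is the center. -/
def starGraph (d : ℕ) : SimpleGraph (Fin d) where
  Adj u v := u ≠ v ∧ (u.val = 0 ∨ v.val = 0)
  symm := ⟨by intro u v h; exact ⟨h.1.symm, h.2.symm⟩⟩
  loopless := ⟨by intro u h; exact h.1 rfl⟩

/-- Correlations on the star: the edge {0, v} carries r v. -/
noncomputable def starRho (d : ℕ) (r : Fin d → ℝ) : Sym2 (Fin d) → ℝ :=
  Sym2.lift ⟨fun u v => if u.val = 0 then r v else if v.val = 0 then r u else 0, by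
    intro u v
    dsimp only
    by_cases hu : u.val = 0 <;> by_cases hv : v.val = 0
    · have huv : u = v := Fin.ext (hu.trans hv.symm)
      simp [hu, hv, huv]
    · simp [hu, hv]
    · simp [hu, hv]
    · simp [hu, hv]⟩

open Real Set

noncomputable def secRate (p q : ℝ) : ℝ :=
  (log p - log q) ^ 2 / (8 * (p - q) * (2 * (p - q) + 1))

noncomputable def sqRate (s t : ℝ) : ℝ :=
  secRate (1 - s)⁻¹ (1 - s * t)⁻¹

theorem Jt_eq_secRate {a b : ℝ} (ha : a ^ 2 < 1) (hb : b ^ 2 < 1) :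
    Jt a b = secRate (1 - a ^ 2)⁻¹ (1 - b ^ 2)⁻¹ := by
  have ha' : 1 - a ^ 2 ≠ 0 := by linarith
  have hb' : 1 - b ^ 2 ≠ 0 := by linarith
  have hlog : log ((1 - b ^ 2) / (1 - a ^ 2)) = log (1 - a ^ 2)⁻¹ - log (1 - b ^ 2)⁻¹ := by
    rw [log_div hb' ha', log_inv, log_inv]; ring
  have hden : 2 * (b ^ 4 + b ^ 2) / (1 - b ^ 2) ^ 2 + 2 * (a ^ 4 + a ^ 2) / (1 - a ^ 2) ^ 2
      - 4 * b ^ 2 * (a ^ 2 + 1) / ((1 - b ^ 2) * (1 - a ^ 2))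
      = 2 * ((1 - a ^ 2)⁻¹ - (1 - b ^ 2)⁻¹) * (2 * ((1 - a ^ 2)⁻¹ - (1 - b ^ 2)⁻¹) + 1) := by
    field_simp
    ring
  rw [Jt, secRate, hlog, hden]
  generalize (1 - a ^ 2)⁻¹ - (1 - b ^ 2)⁻¹ = δ
  generalize 2 * δ + 1 = Z
  ring

theorem Jt_mul_eq_sqRate {a b : ℝ} (ha : a ^ 2 < 1) (hb : b ^ 2 < 1) :
    Jt a (a * b) = sqRate (a ^ 2) (b ^ 2) := by
  rw [Jt_eq_secRate ha (by nlinarith [sq_nonneg a, sq_nonneg b]), sqRate, mul_pow]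

theorem secRate_eq_slope_sq_mul {p q : ℝ} (hqp : q < p) :
    secRate p q = ((log p - log q) / (p - q)) ^ 2 * ((1 - (2 * (p - q) + 1)⁻¹) / 16) := by
  have : 0 < p - q := sub_pos.2 hqp
  rw [secRate]
  field_simp
  ring

theorem secRate_antitoneOn {p : ℝ} : AntitoneOn (secRate p) (Ioo 0 p) := by
  rintro q ⟨hq, hqp⟩ q' ⟨hq', hq'p⟩ hqq'
  rcases hqq'.eq_or_lt with rfl | hlt
  · rfl
  have hslope : (log p - log q') / (p - q') < (log p - log q) / (p - q) := by
    have := strictConcaveOn_log_Ioi.secant_strict_mono (mem_Ioi.2 (hq.trans hqp)) (mem_Ioi.2 hq)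
      (mem_Ioi.2 hq') hqp.ne hq'p.ne hlt
    rwa [← neg_div_neg_eq, neg_sub, neg_sub, ← neg_div_neg_eq (log q - _), neg_sub, neg_sub] at this
  have hslope₀ : 0 ≤ (log p - log q') / (p - q') :=
    div_nonneg (sub_nonneg.2 (log_le_log hq' hq'p.le)) (sub_pos.2 hq'p).le
  rw [secRate_eq_slope_sq_mul hqp, secRate_eq_slope_sq_mul hq'p]
  have : (2 * (p - q') + 1)⁻¹ ≤ 1 := inv_le_one_of_one_le₀ (by linarith)
  gcongr

theorem sqRate_antitoneOn_right {s : ℝ} (hs₀ : 0 < s) (hs₁ : s < 1) :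
    AntitoneOn (sqRate s) (Iio 1) := by
  intro t _ t' ht' htt'
  have hst : s * t ≤ s * t' := mul_le_mul_of_nonneg_left htt' hs₀.le
  have hst' : s * t' < s := mul_lt_of_lt_one_right hs₀ ht'
  have hmem : ∀ {y}, s * y ≤ s * t' → (1 - s * y)⁻¹ ∈ Ioo 0 (1 - s)⁻¹ := fun hy =>
    ⟨inv_pos.2 (by linarith), inv_strictAnti₀ (by linarith) (by linarith)⟩
  exact secRate_antitoneOn (hmem hst) (hmem le_rfl) (inv_anti₀ (by linarith) (by linarith))

theorem hasDerivAt_secRate {P Q : ℝ → ℝ} {P' Q' x : ℝ} (hP : HasDerivAt P P' x)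
    (hQ : HasDerivAt Q Q' x) (hQ₀ : 0 < Q x) (hQP : Q x < P x) :
    HasDerivAt (fun y => secRate (P y) (Q y))
      (8 * (log (P x) - log (Q x)) *
          (2 * (P' / P x - Q' / Q x) * (P x - Q x) * (2 * (P x - Q x) + 1)
            - (log (P x) - log (Q x)) * (P' - Q') * (4 * (P x - Q x) + 1))
        / (8 * (P x - Q x) * (2 * (P x - Q x) + 1)) ^ 2) x := by
  have hL := (hP.log (hQ₀.trans hQP).ne').fun_sub (hQ.log hQ₀.ne')
  have hδ := hP.fun_sub hQ
  have hδ₀ : 0 < P x - Q x := sub_pos.2 hQP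
  refine ((hL.fun_pow 2).div ((hδ.const_mul 8).fun_mul ((hδ.const_mul 2).add_const 1))
    (by positivity)).congr_deriv ?_
  generalize log (P x) - log (Q x) = L
  generalize P' / P x - Q' / Q x = L'
  generalize P x - Q x = δ at hδ₀ ⊢
  field_simp
  ring

theorem hasDerivAt_one_sub_mul_inv (c x : ℝ) (h : x * c ≠ 1) :
    HasDerivAt (fun y => (1 - y * c)⁻¹) (c * (1 - x * c)⁻¹ ^ 2) x := by
  have h' : 1 - x * c ≠ 0 := sub_ne_zero.2 (Ne.symm h)
  refine (((hasDerivAt_id' (x := x)).mul_const c).const_sub 1).fun_inv h' |>.congr_deriv ?_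
  field_simp

-- With `p = (1 - s)⁻¹` and `q = (1 - s * t)⁻¹` this is the sign condition for `∂ₛ sqRate s t` once
-- `log` is bounded via `sinh`; `p ≤ 5 / 3` is `s ≤ 2 / 5` and `p ^ 2 ≤ q * (2 * p - 1)` is `s ≤ t`.
theorem deriv_sign_cubic_lt {p q : ℝ} (hp₁ : 1 ≤ p) (hp : p ≤ 5 / 3)
    (hpq : p ^ 2 ≤ q * (2 * p - 1)) :
    (p + q) * (p + q - 1) * (4 * (p - q) + 1) < 4 * p * q * (2 * (p - q) + 1) := by
  have hm : 0 < 2 * p - 1 := by linarith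
  have h₀ : 0 < -p + 4 * p ^ 2 + 8 * p ^ 3 - 47 * p ^ 4 + 58 * p ^ 5 - 20 * p ^ 6 := by
    have h : 0 ≤ 5 / 3 - p := by linarith
    have h' : 0 ≤ p - 1 := by linarith
    nlinarith [mul_nonneg h' h, mul_nonneg (pow_nonneg h' 2) h, mul_nonneg (pow_nonneg h' 3) h,
      mul_nonneg (pow_nonneg h' 4) h, mul_nonneg (pow_nonneg h' 5) h]
  have h₁ : 0 < 1 - 2 * p + 10 * p ^ 2 - 20 * p ^ 3 + 12 * p ^ 4 := by
    nlinarith [pow_nonneg (sub_nonneg.2 hp₁) 3, pow_nonneg (sub_nonneg.2 hp₁) 4]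
  have h₂ : 0 < 5 - 6 * p + 4 * p ^ 2 := by nlinarith [sq_nonneg (p - 1)]
  -- in terms of `w = q * (2 * p - 1) - p ^ 2 ≥ 0` all coefficients are positive on `[1, 5 / 3]`
  have key : (2 * p - 1) ^ 3 * (4 * p * q * (2 * (p - q) + 1)
        - (p + q) * (p + q - 1) * (4 * (p - q) + 1))
      = (-p + 4 * p ^ 2 + 8 * p ^ 3 - 47 * p ^ 4 + 58 * p ^ 5 - 20 * p ^ 6)
        + (q * (2 * p - 1) - p ^ 2) * (1 - 2 * p + 10 * p ^ 2 - 20 * p ^ 3 + 12 * p ^ 4)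
        + (q * (2 * p - 1) - p ^ 2) ^ 2 * (5 - 6 * p + 4 * p ^ 2)
        + 4 * (q * (2 * p - 1) - p ^ 2) ^ 3 := by ring
  have hw : 0 ≤ q * (2 * p - 1) - p ^ 2 := sub_nonneg.2 hpq
  generalize q * (2 * p - 1) - p ^ 2 = w at key hw
  have : 0 < (2 * p - 1) ^ 3 * (4 * p * q * (2 * (p - q) + 1)
      - (p + q) * (p + q - 1) * (4 * (p - q) + 1)) := by rw [key]; positivity
  exact sub_pos.1 (pos_of_mul_pos_right this (by positivity))

theorem secRate_deriv_factor_pos {p q t L : ℝ} (hq : 0 < q) (hqp : q < p) (hp : p ≤ 5 / 3)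
    (hpq : p ^ 2 ≤ q * (2 * p - 1)) (hrel : (p - 1) * (t * q) = p * (q - 1))
    (hL : L ≤ (p / q - (p / q)⁻¹) / 2) :
    0 < 2 * (p - t * q) * (p - q) * (2 * (p - q) + 1)
      - L * (p ^ 2 - t * q ^ 2) * (4 * (p - q) + 1) := by
  have hp₁ : 1 < p := by nlinarith
  have hδ : 0 < p - q := sub_pos.2 hqp
  have hsum : 0 < (p + q - 1) * (4 * (p - q) + 1) := by
    apply mul_pos <;> linarith
  have hL' : L ≤ (p - q) * (p + q) / (2 * p * q) := by
    convert hL using 1; field_simp; ring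
  have hN := sub_pos.2 <| calc L * ((p + q - 1) * (4 * (p - q) + 1))
      ≤ (p - q) * (p + q) / (2 * p * q) * ((p + q - 1) * (4 * (p - q) + 1)) := by gcongr
    _ < 2 * (p - q) * (2 * (p - q) + 1) := by
      rw [div_mul_eq_mul_div, div_lt_iff₀ (by positivity)]
      nlinarith [mul_lt_mul_of_pos_left (deriv_sign_cubic_lt hp₁.le hp hpq) hδ]
  -- the relation `hrel` eliminates `t`
  have key : (p - 1) * (2 * (p - t * q) * (p - q) * (2 * (p - q) + 1)
        - L * (p ^ 2 - t * q ^ 2) * (4 * (p - q) + 1))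
      = p * (p - q)
        * (2 * (p - q) * (2 * (p - q) + 1) - L * ((p + q - 1) * (4 * (p - q) + 1))) := by
    linear_combination (L * q * (4 * (p - q) + 1) - 2 * (p - q) * (2 * (p - q) + 1)) * hrel
  exact pos_of_mul_pos_right (key ▸ by positivity) (sub_pos.2 hp₁).le

theorem log_le_half_sub_inv {x : ℝ} (hx : 1 ≤ x) : log x ≤ (x - x⁻¹) / 2 := by
  rw [← sinh_log (by linarith)]
  exact self_le_sinh_iff.2 (log_nonneg hx)

theorem exists_hasDerivAt_sqRate_left_pos {t x : ℝ} (ht : t ≤ 2 / 5) (hx : x ∈ Ioc 0 t) :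
    ∃ f', HasDerivAt (fun s => sqRate s t) f' x ∧ 0 < f' := by
  obtain ⟨hx₀, hxt⟩ := hx
  have h₁ : 0 < 1 - x := by linarith
  have hxt₁ : 1 - x < 1 - x * t := by nlinarith
  have h₂ : 0 < 1 - x * t := h₁.trans hxt₁
  have hP : HasDerivAt (fun y => (1 - y)⁻¹) ((1 - x)⁻¹ ^ 2) x := by
    simpa using hasDerivAt_one_sub_mul_inv 1 x (by linarith)
  have hQ := hasDerivAt_one_sub_mul_inv t x (by linarith)
  set p := (1 - x)⁻¹
  set q := (1 - x * t)⁻¹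
  have hq : 0 < q := inv_pos.2 h₂
  have hqp : q < p := inv_strictAnti₀ h₁ hxt₁
  have hp : p ≤ 5 / 3 :=
    (inv_anti₀ (by norm_num) (by linarith : (3 : ℝ) / 5 ≤ 1 - x)).trans_eq (by norm_num)
  have hpq : p ^ 2 ≤ q * (2 * p - 1) := by
    have e : q * (2 * p - 1) - p ^ 2 = x * (t - x) / ((1 - x) ^ 2 * (1 - x * t)) := by
      simp only [p, q]; field_simp; ring
    rw [← sub_nonneg, e]
    exact div_nonneg (mul_nonneg hx₀.le (sub_nonneg.2 hxt)) (by positivity)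
  have hrel : (p - 1) * (t * q) = p * (q - 1) := by
    simp only [p, q]; field_simp; ring
  have hL₀ : 0 < log p - log q := sub_pos.2 (log_lt_log hq hqp)
  have hL : log p - log q ≤ (p / q - (p / q)⁻¹) / 2 := by
    rw [← log_div (hq.trans hqp).ne' hq.ne']
    exact log_le_half_sub_inv ((one_le_div hq).2 hqp.le)
  refine ⟨_, hasDerivAt_secRate hP hQ hq hqp, ?_⟩
  rw [show p ^ 2 / p = p by field_simp, show t * q ^ 2 / q = t * q by field_simp]
  exact div_pos (mul_pos (by positivity) (secRate_deriv_factor_pos hq hqp hp hpq hrel hL))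
    (by positivity)

theorem sqRate_strictMonoOn_left {t : ℝ} (ht : t ≤ 2 / 5) :
    StrictMonoOn (fun s => sqRate s t) (Ioc 0 t) := by
  refine strictMonoOn_of_deriv_pos (convex_Ioc 0 t) (fun x hx => ?_) (fun x hx => ?_)
  · obtain ⟨f', hf, -⟩ := exists_hasDerivAt_sqRate_left_pos ht hx
    exact hf.continuousAt.continuousWithinAt
  · rw [interior_Ioc] at hx
    obtain ⟨f', hf, hf'⟩ := exists_hasDerivAt_sqRate_left_pos ht (Ioo_subset_Ioc_self hx)
    rwa [hf.deriv]

theorem starRho_mk_right_center {d : ℕ} (r : Fin d → ℝ) (u : Fin d) {c : Fin d} (hc : c.val = 0) :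
    starRho d r s(u, c) = r u := by
  by_cases hu : u.val = 0
  · obtain rfl : u = c := Fin.ext (hu.trans hc.symm)
    simp [starRho, hu]
  · simp [starRho, hu, hc]

theorem starRho_mk_left_center {d : ℕ} (r : Fin d → ℝ) {c : Fin d} (hc : c.val = 0) (v : Fin d) :
    starRho d r s(c, v) = r v := by
  rw [Sym2.eq_swap, starRho_mk_right_center r v hc]

theorem starGraph_edges_of_isPath {d : ℕ} {u v : Fin d} (p : (starGraph d).Walk u v)
    (hp : p.IsPath) (hu : u.val ≠ 0) (hv : v.val ≠ 0) (huv : u ≠ v) :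
    ∃ c : Fin d, c.val = 0 ∧ p.edges = [s(u, c), s(c, v)] := by
  rcases p with _ | ⟨h, _ | ⟨h', _ | ⟨h'', q⟩⟩⟩
  · exact absurd rfl huv
  · exact absurd (h.2.resolve_left hu) hv
  · exact ⟨_, h.2.resolve_left hu, rfl⟩
  · -- the third edge leaves a leaf, so it returns to the centre
    exfalso
    have hc := h.2.resolve_left hu
    have hy : _ ≠ 0 := fun hy => h'.1 (Fin.ext (hc.trans hy.symm))
    have hz := h''.2.resolve_left hy
    obtain rfl := Fin.ext (hz.trans hc.symm)
    rw [SimpleGraph.Walk.cons_isPath_iff, SimpleGraph.Walk.cons_isPath_iff] at hp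
    exact hp.1.2 (List.mem_cons_of_mem _ q.start_mem_support)

theorem Ktilde_starGraph (d : ℕ) (r : Fin d → ℝ) :
    Ktilde (starGraph d) (starRho d r) =
      sInf {x | ∃ u v : Fin d, u.val ≠ 0 ∧ v.val ≠ 0 ∧ u ≠ v ∧ x = Jt (r u) (r u * r v)} := by
  unfold Ktilde
  congr 1
  ext x
  constructor
  · rintro ⟨u, v, p, hp, huv, hnadj, e, he, rfl⟩
    have hu : u.val ≠ 0 := fun h => hnadj ⟨huv, Or.inl h⟩
    have hv : v.val ≠ 0 := fun h => hnadj ⟨huv, Or.inr h⟩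
    obtain ⟨c, hc, hedges⟩ := starGraph_edges_of_isPath p hp hu hv huv
    rw [hedges] at he ⊢
    simp only [List.map_cons, List.map_nil, List.prod_cons, List.prod_nil, mul_one,
      starRho_mk_right_center r u hc, starRho_mk_left_center r hc v]
    rcases List.mem_pair.1 he with rfl | rfl
    · exact ⟨u, v, hu, hv, huv, by rw [starRho_mk_right_center r u hc]⟩
    · exact ⟨v, u, hv, hu, huv.symm, by rw [starRho_mk_left_center r hc v, mul_comm]⟩
  · rintro ⟨u, v, hu, hv, huv, rfl⟩
    let c : Fin d := ⟨0, by omega⟩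
    have huc : (starGraph d).Adj u c := ⟨fun h => hu (congrArg Fin.val h), Or.inr rfl⟩
    have hcv : (starGraph d).Adj c v := ⟨fun h => hv (congrArg Fin.val h).symm, Or.inl rfl⟩
    refine ⟨u, v, .cons huc (.cons hcv .nil), ?_, huv, fun h => h.2.elim hu hv, s(u, c),
      by simp, ?_⟩
    · simp [SimpleGraph.Walk.cons_isPath_iff, huv, huc.ne, hcv.ne]
    · have hc : c.val = 0 := rfl
      simp [starRho_mk_right_center r u hc, starRho_mk_left_center r hc v]

theorem min_sqRate_le_sqRate {s₁ s₂ sₙ a b : ℝ} (ha₀ : 0 < a) (ha : a ≤ s₁) (hs₁ : s₁ ≤ 2 / 5)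
    (hs₂ : s₂ ≤ s₁) (hb : b ≤ s₁) (hcases : (a = s₁ ∧ b ≤ s₂) ∨ (0 < sₙ ∧ sₙ ≤ a)) :
    min (sqRate s₁ s₂) (sqRate sₙ s₁) ≤ sqRate a b := by
  have hlt : ∀ {y}, y ≤ s₁ → y < 1 := fun hy => by linarith
  rcases hcases with ⟨rfl, hb₂⟩ | ⟨hsₙ, hsₙa⟩
  · exact (min_le_left _ _).trans <|
      sqRate_antitoneOn_right ha₀ (hlt le_rfl) (hlt (hb₂.trans hs₂)) (hlt hs₂) hb₂
  · refine (min_le_right _ _).trans ((sqRate_strictMonoOn_left hs₁).monotoneOn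
      ⟨hsₙ, hsₙa.trans ha⟩ ⟨ha₀, ha⟩ hsₙa |>.trans ?_)
    exact sqRate_antitoneOn_right ha₀ (hlt ha) (hlt hb) (hlt le_rfl) hb

/-- For the star with correlations sorted in decreasing order of magnitude
(|ρ₁| ≥ … ≥ |ρ_{d−1}|, edge {0,v} carrying r v) and |ρ₁| < ρcrit = 0.63055,
the approximate error exponent is the minimum of only two crossover rates:
K̃(star) = min{J̃(ρ₁, ρ₁ρ₂), J̃(ρ_{d−1}, ρ_{d−1}ρ₁)}. -/
theorem star_two_rates (d : ℕ) (hd : 4 ≤ d) (r : Fin d → ℝ)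
    (hr : ∀ v : Fin d, v.val ≠ 0 → r v ∈ Set.Ioo (-1 : ℝ) 1 ∧ r v ≠ 0)
    (hsort : ∀ v w : Fin d, 0 < v.val → v ≤ w → |r w| ≤ |r v|)
    (hcrit : |r ⟨1, by omega⟩| < 0.63055) :
    Ktilde (starGraph d) (starRho d r)
      = min (Jt (r ⟨1, by omega⟩) (r ⟨1, by omega⟩ * r ⟨2, by omega⟩))
            (Jt (r ⟨d - 1, by omega⟩) (r ⟨d - 1, by omega⟩ * r ⟨1, by omega⟩)) := by
  have hsq : ∀ v : Fin d, v.val ≠ 0 → 0 < r v ^ 2 ∧ r v ^ 2 < 1 := fun v hv =>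
    ⟨sq_pos_of_ne_zero (hr v hv).2, (sq_lt_one_iff_abs_lt_one _).2 (abs_lt.2 (hr v hv).1)⟩
  have hsq_le : ∀ v w : Fin d, 0 < v.val → v ≤ w → r w ^ 2 ≤ r v ^ 2 :=
    fun v w hv hvw => sq_le_sq.2 (hsort v w hv hvw)
  have hJ : ∀ u v : Fin d, u.val ≠ 0 → v.val ≠ 0 →
      Jt (r u) (r u * r v) = sqRate (r u ^ 2) (r v ^ 2) :=
    fun u v hu hv => Jt_mul_eq_sqRate (hsq u hu).2 (hsq v hv).2
  rw [Ktilde_starGraph]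
  refine IsLeast.csInf_eq ⟨?_, ?_⟩
  · rcases min_choice (Jt (r ⟨1, by omega⟩) (r ⟨1, by omega⟩ * r ⟨2, by omega⟩))
      (Jt (r ⟨d - 1, by omega⟩) (r ⟨d - 1, by omega⟩ * r ⟨1, by omega⟩)) with h | h <;> rw [h]
    · exact ⟨_, _, one_ne_zero, two_ne_zero, by simp [Fin.ext_iff], rfl⟩
    · exact ⟨_, _, by simp; omega, one_ne_zero, by simp [Fin.ext_iff]; omega, rfl⟩
  · rintro _ ⟨u, v, hu, hv, huv, rfl⟩
    rw [hJ _ _ hu hv, hJ _ _ one_ne_zero two_ne_zero, hJ _ _ (by simp; omega) one_ne_zero]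
    have hs₁ : r ⟨1, by omega⟩ ^ 2 ≤ 2 / 5 := by
      nlinarith [sq_abs (r ⟨1, by omega⟩), abs_nonneg (r ⟨1, by omega⟩)]
    refine min_sqRate_le_sqRate (hsq u hu).1 (hsq_le _ u one_pos (by simp [Fin.le_def]; omega))
      hs₁ (hsq_le _ _ one_pos (by simp [Fin.le_def]))
      (hsq_le _ v one_pos (by simp [Fin.le_def]; omega)) ?_
    by_cases hu₁ : u.val = 1
    · have hv₁ := Fin.val_ne_of_ne huv
      rw [show u = ⟨1, by omega⟩ from Fin.ext hu₁]
      exact Or.inl ⟨rfl, hsq_le _ v two_pos (by simp [Fin.le_def]; omega)⟩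
    · exact Or.inr ⟨(hsq _ (by simp; omega)).1, hsq_le u _ (by omega) (by simp [Fin.le_def]; omega)⟩
end

section
/- Let d ≥ 3 and let the star on d vertices carry edge correlations ρ₁,…,ρ_{d−1} ∈ (−1,1)∖{0} on its d−1 edges. Then the approximate error exponent of the star equals the minimum of the edge weights over all unordered pairs of distinct indices: K̃(star) = min over 1 ≤ i < j ≤ d−1 of W(ρ_i, ρ_j). In particular, K̃(star) does not depend on which edge of the star carries which correlation coefficient. -/
noncomputable def W (a b : ℝ) : ℝ := min (Jt a (a * b)) (Jt b (a * b))

/-! Every non-edge of the star joins two distinct leaves `v, w`, and the path between them is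
`v – 0 – w`; so the non-edge carries the correlation `r v * r w` and contributes the two terms
`J̃(r v, r v r w)` and `J̃(r w, r v r w)`. Thus `K̃` is the infimum of `J̃(r v, r v r w)` over ordered
pairs of distinct leaves. Grouping each unordered pair gives `W`, and a relabelling of the leaves
only reindexes this set. -/

open SimpleGraph (Walk)

theorem sInf_offDiag_eq_sInf_min {ι α : Type*} [LinearOrder ι] [ConditionallyCompleteLinearOrder α]
    (s : Set ι) (f : ι → ι → α) :
    sInf {x | ∃ v ∈ s, ∃ w ∈ s, v ≠ w ∧ x = f v w}
      = sInf {x | ∃ v ∈ s, ∃ w ∈ s, v < w ∧ x = min (f v w) (f w v)} := by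
  apply csInf_eq_csInf_of_forall_exists_le
  · rintro _ ⟨v, hv, w, hw, hvw, rfl⟩
    rcases hvw.lt_or_gt with hlt | hgt
    · exact ⟨_, ⟨v, hv, w, hw, hlt, rfl⟩, min_le_left _ _⟩
    · exact ⟨_, ⟨w, hw, v, hv, hgt, rfl⟩, min_le_right _ _⟩
  · rintro _ ⟨v, hv, w, hw, hvw, rfl⟩
    rcases min_choice (f v w) (f w v) with h | h
    · exact ⟨_, ⟨v, hv, w, hw, hvw.ne, rfl⟩, h.ge⟩
    · exact ⟨_, ⟨w, hw, v, hv, hvw.ne', rfl⟩, h.ge⟩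

lemma W_eq_min (a b : ℝ) : W a b = min (Jt a (a * b)) (Jt b (b * a)) := by
  rw [W, mul_comm b a]

namespace starGraph

variable {d : ℕ}

lemma eq_of_center_notMem_support (hz : 0 < d) {u v : Fin d} (p : (starGraph d).Walk u v)
    (hp : ⟨0, hz⟩ ∉ p.support) : u = v := by
  cases p with
  | nil => rfl
  | cons h q =>
    exfalso
    rcases h.2 with hu | hx
    · obtain rfl : u = ⟨0, hz⟩ := Fin.ext hu
      exact hp (Walk.start_mem_support _)
    · obtain rfl : _ = (⟨0, hz⟩ : Fin d) := Fin.ext hx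
      exact hp (List.mem_cons_of_mem _ q.start_mem_support)

lemma edges_of_isPath (hz : 0 < d) {u v : Fin d} (p : (starGraph d).Walk u v) (hp : p.IsPath)
    (hu : u.val ≠ 0) (hv : v.val ≠ 0) (huv : u ≠ v) :
    p.edges = [s(u, ⟨0, hz⟩), s(⟨0, hz⟩, v)] := by
  cases p with
  | nil => exact absurd rfl huv
  | cons hux q =>
    obtain rfl : _ = (⟨0, hz⟩ : Fin d) := Fin.ext (hux.2.resolve_left hu)
    cases q with
    | nil => exact absurd rfl hv
    | cons _ q =>
      obtain ⟨hq, hc⟩ := (Walk.cons_isPath_iff _ _).mp hp.of_cons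
      obtain rfl := eq_of_center_notMem_support hz q hc
      obtain rfl := (Walk.isPath_iff_nil.mp hq).eq_nil
      rfl

lemma adj_center (hz : 0 < d) {v : Fin d} (hv : v.val ≠ 0) : (starGraph d).Adj v ⟨0, hz⟩ :=
  ⟨Fin.ne_of_val_ne hv, .inr rfl⟩

lemma starRho_center (r : Fin d → ℝ) (hz : 0 < d) (v : Fin d) :
    starRho d r s(⟨0, hz⟩, v) = r v := by
  simp [starRho]

lemma starRho_to_center (r : Fin d → ℝ) (hz : 0 < d) (v : Fin d) :
    starRho d r s(v, ⟨0, hz⟩) = r v := by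
  rw [Sym2.eq_swap, starRho_center]

def leafExponents (r : Fin d → ℝ) : Set ℝ :=
  {x | ∃ v ∈ {v : Fin d | v.val ≠ 0}, ∃ w ∈ {v : Fin d | v.val ≠ 0}, v ≠ w ∧
    x = Jt (r v) (r v * r w)}

lemma Ktilde_eq (r : Fin d → ℝ) :
    Ktilde (starGraph d) (starRho d r) = sInf (leafExponents r) := by
  rw [Ktilde]
  congr 1
  ext x
  constructor
  · rintro ⟨u, v, p, hp, huv, hna, e, he, rfl⟩
    obtain ⟨hu, hv⟩ : u.val ≠ 0 ∧ v.val ≠ 0 := by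
      simpa [starGraph, huv, not_or] using hna
    rw [edges_of_isPath u.pos p hp hu hv huv] at he ⊢
    simp only [List.map_cons, List.map_nil, List.prod_cons, List.prod_nil, mul_one,
      starRho_center, starRho_to_center]
    rcases List.mem_pair.mp he with rfl | rfl
    · exact ⟨u, hu, v, hv, huv, by rw [starRho_to_center]⟩
    · exact ⟨v, hv, u, hu, huv.symm, by rw [starRho_center, mul_comm]⟩
  · rintro ⟨v, hv : v.val ≠ 0, w, hw : w.val ≠ 0, hvw, rfl⟩
    have hz := v.pos
    let p : (starGraph d).Walk v w :=
      .cons (adj_center hz hv) (.cons (adj_center hz hw).symm .nil)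
    refine ⟨v, w, p, ?_, hvw, ?_, s(v, ⟨0, hz⟩), by simp [p], ?_⟩
    · have hvc : v ≠ ⟨0, hz⟩ := Fin.ne_of_val_ne hv
      have hwc : w ≠ ⟨0, hz⟩ := Fin.ne_of_val_ne hw
      simp [p, Walk.cons_isPath_iff, hvw, hvc, hwc.symm]
    · simp [starGraph, hvw, hv, hw]
    · simp [p, starRho_center, starRho_to_center]

lemma val_perm_eq_zero_iff (hz : 0 < d) {g : Equiv.Perm (Fin d)} (hg : g ⟨0, hz⟩ = ⟨0, hz⟩)
    (v : Fin d) : (g v).val = 0 ↔ v.val = 0 := by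
  have h := g.injective.eq_iff (a := v) (b := ⟨0, hz⟩)
  rwa [hg, Fin.ext_iff, Fin.ext_iff] at h

lemma leafExponents_comp_perm_subset (r : Fin d → ℝ) (hz : 0 < d) {g : Equiv.Perm (Fin d)}
    (hg : g ⟨0, hz⟩ = ⟨0, hz⟩) : leafExponents (r ∘ g) ⊆ leafExponents r := by
  rintro _ ⟨v, hv, w, hw, hvw, rfl⟩
  exact ⟨g v, (val_perm_eq_zero_iff hz hg v).not.mpr hv, g w,
    (val_perm_eq_zero_iff hz hg w).not.mpr hw, g.injective.ne hvw, rfl⟩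

lemma leafExponents_comp_perm (r : Fin d → ℝ) (hz : 0 < d) {g : Equiv.Perm (Fin d)}
    (hg : g ⟨0, hz⟩ = ⟨0, hz⟩) : leafExponents (r ∘ g) = leafExponents r := by
  refine (leafExponents_comp_perm_subset r hz hg).antisymm ?_
  simpa [Function.comp_assoc] using
    leafExponents_comp_perm_subset (r ∘ g) hz (g.symm_apply_eq.mpr hg.symm)

end starGraph

/-- For the star on d ≥ 3 vertices with correlations r v on the edges {0, v}, the
approximate error exponent equals the minimum of the edge weights over all unordered pairs
of distinct indices; in particular it does not depend on which edge carries which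
correlation coefficient. -/
theorem star_Ktilde_eq (d : ℕ) (hd : 3 ≤ d) (r : Fin d → ℝ) :
    Ktilde (starGraph d) (starRho d r)
      = sInf { x : ℝ | ∃ v w : Fin d, 0 < v.val ∧ v < w ∧ x = W (r v) (r w) }
    ∧ ∀ g : Equiv.Perm (Fin d), g ⟨0, by omega⟩ = ⟨0, by omega⟩ →
        Ktilde (starGraph d) (starRho d (r ∘ g)) = Ktilde (starGraph d) (starRho d r) := by
  refine ⟨?_, fun g hg => ?_⟩
  · rw [starGraph.Ktilde_eq, starGraph.leafExponents, sInf_offDiag_eq_sInf_min]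
    congr 1
    ext x
    constructor
    · rintro ⟨v, hv, w, -, hvw, rfl⟩
      exact ⟨v, w, Nat.pos_of_ne_zero hv, hvw, (W_eq_min _ _).symm⟩
    · rintro ⟨v, w, hv, hvw, rfl⟩
      exact ⟨v, hv.ne', w, (hv.trans hvw).ne', hvw, W_eq_min _ _⟩
  · rw [starGraph.Ktilde_eq, starGraph.Ktilde_eq, starGraph.leafExponents_comp_perm r _ hg]
end
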